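/- Let X be a reflexive Banach space and R a ψ-regular functional on [0,T]×X with the time-modulus σ(t−s) = ∫ₛᵗ ρ(τ)dτ for a nonnegative ρ∈L¹, and lower bound α_*ψ ≤ R(t,·). Then for any f∈BV_R([0,T];X) and 0≤s≤t≤T with ∫ₛᵗ ρ(τ)dτ < α_*, the variation satisfies V_R(f;s,t) ≥ (1 − (1/α_*)∫ₛᵗ ρ(τ)dτ) V_{R(s)}(f;s,t), where V_{R(s)} denotes the variation computed with the time-frozen functional R(s,·). In particular V_R(f;s,t) ≥ (1 − (1/α_*)∫ₛᵗρ dτ) R(s, f(t)−f(s)). -/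

import Mathlib

/-!
Freezing time at `s` costs at most `ψ(v) ∫ₛ^τ ρ` per increment `v`, and the lower bound
`α_* ψ ≤ R(τ, ·)` turns this into `R(s, v) ≤ (1 + β) R(τ, v)` with `β = (1/α_*) ∫ₛᵗ ρ`. Summing over
fine partitions gives `V_{R(s)} ≤ (1 + β) V_R`, hence `(1 - β) V_{R(s)} ≤ (1 - β²) V_R ≤ V_R`.
Finally `R(s, ·)` is subadditive, so `R(s, f(t) - f(s))` is bounded by every frozen partition sum.
-/

open MeasureTheory Set Filter ENNReal

/-- A fine sequence of partitions of `[s,t]`. -/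
def IsFineSeq (s t : ℝ) (n : ℕ → ℕ) (P : ℕ → ℕ → ℝ) : Prop :=
  (∀ j, P j 0 = s) ∧ (∀ j, P j (n j) = t) ∧
    (∀ j, ∀ k, k < n j → P j k < P j (k + 1)) ∧
    ∀ ε > (0:ℝ), ∃ N : ℕ, ∀ j ≥ N, ∀ k < n j, P j (k + 1) - P j k < ε

/-- The sum `Σ_{k=1}^{n} R(t_{k-1}, f(t_k) - f(t_{k-1}))` over a partition. -/
noncomputable def partSum {X : Type*} [NormedAddCommGroup X]
    (R : ℝ → X → ℝ≥0∞) (f : ℝ → X) (n : ℕ) (P : ℕ → ℝ) : ℝ≥0∞ :=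
  ∑ k ∈ Finset.range n, R (P k) (f (P (k + 1)) - f (P k))

/-- `V` is the `R`-variation of `f` on `[s,t]`. -/
def RVarEq {X : Type*} [NormedAddCommGroup X]
    (R : ℝ → X → ℝ≥0∞) (f : ℝ → X) (s t : ℝ) (V : ℝ≥0∞) : Prop :=
  ∀ (n : ℕ → ℕ) (P : ℕ → ℕ → ℝ), IsFineSeq s t n P →
    Tendsto (fun j => partSum R f (n j) (P j)) atTop (nhds V)

namespace IsFineSeq

variable {s t : ℝ} {n : ℕ → ℕ} {P : ℕ → ℕ → ℝ}

lemma le_apply (h : IsFineSeq s t n P) (j : ℕ) {k : ℕ} (hk : k ≤ n j) : s ≤ P j k := by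
  induction k with
  | zero => exact (h.1 j).ge
  | succ k ih => exact (ih (by omega)).trans (h.2.2.1 j k (by omega)).le

lemma apply_le (h : IsFineSeq s t n P) (j : ℕ) {k : ℕ} (hk : k ≤ n j) : P j k ≤ t := by
  refine Nat.decreasingInduction (motive := fun k _ => P j k ≤ t)
    (fun k hk ih => (h.2.2.1 j k hk).le.trans ih) (h.2.1 j).le hk

lemma mem_Icc (h : IsFineSeq s t n P) (j : ℕ) {k : ℕ} (hk : k ≤ n j) : P j k ∈ Icc s t :=
  ⟨h.le_apply j hk, h.apply_le j hk⟩

end IsFineSeq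

lemma isFineSeq_uniform {s t : ℝ} (hst : s < t) :
    IsFineSeq s t (fun j => j + 1) (fun j k => s + (t - s) * (k / (j + 1))) := by
  have hstep : ∀ j k : ℕ, s + (t - s) * (((k + 1 : ℕ) : ℝ) / (j + 1))
      - (s + (t - s) * ((k : ℝ) / (j + 1))) = (t - s) * (1 / (j + 1)) := by
    intro j k; push_cast; ring
  refine ⟨fun j => by simp, fun j => by push_cast; field_simp; ring, fun j k _ => ?_, ?_⟩
  · have hwidth : 0 < (t - s) * (1 / ((j : ℝ) + 1)) :=
      _root_.mul_pos (by linarith) (by positivity)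
    linarith [hstep j k]
  · intro ε hε
    have hmesh : Tendsto (fun j : ℕ => (t - s) * (1 / ((j : ℝ) + 1))) atTop (nhds 0) := by
      simpa using tendsto_one_div_add_atTop_nhds_zero_nat.const_mul (t - s)
    obtain ⟨N, hN⟩ := eventually_atTop.1 ((tendsto_order.1 hmesh).2 ε hε)
    exact ⟨N, fun j hj k _ => (hstep j k).trans_lt (hN j hj)⟩

lemma exists_isFineSeq {s t : ℝ} (hst : s ≤ t) : ∃ n P, IsFineSeq s t n P := by
  rcases hst.eq_or_lt with rfl | hlt
  · exact ⟨fun _ => 0, fun _ _ => s, fun _ => rfl, fun _ => rfl,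
      fun _ _ hk => (Nat.not_lt_zero _ hk).elim, fun _ _ => ⟨0, fun _ _ _ hk => (Nat.not_lt_zero _ hk).elim⟩⟩
  · exact ⟨_, _, isFineSeq_uniform hlt⟩

section Variation

variable {X : Type*} [NormedAddCommGroup X]

lemma partSum_le_const_mul_partSum {R₁ R₂ : ℝ → X → ℝ≥0∞} {C : ℝ≥0∞} {s t : ℝ}
    (hR : ∀ τ ∈ Icc s t, ∀ v, R₁ τ v ≤ C * R₂ τ v) (f : ℝ → X) {n : ℕ} {P : ℕ → ℝ}
    (hP : ∀ k < n, P k ∈ Icc s t) :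
    partSum R₁ f n P ≤ C * partSum R₂ f n P := by
  rw [partSum, partSum, Finset.mul_sum]
  exact Finset.sum_le_sum fun k hk => hR _ (hP k (Finset.mem_range.1 hk)) _

lemma RVarEq.le_const_mul {R₁ R₂ : ℝ → X → ℝ≥0∞} {f : ℝ → X} {s t : ℝ} {V₁ V₂ C : ℝ≥0∞}
    (h₁ : RVarEq R₁ f s t V₁) (h₂ : RVarEq R₂ f s t V₂) (hC : C ≠ ⊤) (hst : s ≤ t)
    (hR : ∀ τ ∈ Icc s t, ∀ v, R₁ τ v ≤ C * R₂ τ v) :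
    V₁ ≤ C * V₂ := by
  obtain ⟨n, P, hP⟩ := exists_isFineSeq hst
  exact le_of_tendsto_of_tendsto' (h₁ n P hP) (ENNReal.Tendsto.const_mul (h₂ n P hP) (Or.inr hC))
    fun j => partSum_le_const_mul_partSum hR f fun k hk => hP.mem_Icc j hk.le

lemma RVarEq.apply_sub_le {g : X → ℝ≥0∞} {f : ℝ → X} {s t : ℝ} {V : ℝ≥0∞}
    (hV : RVarEq (fun _ => g) f s t V) (hg0 : g 0 = 0) (hg : ∀ u v, g (u + v) ≤ g u + g v)
    (hst : s ≤ t) :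
    g (f t - f s) ≤ V := by
  obtain ⟨n, P, hP⟩ := exists_isFineSeq hst
  refine ge_of_tendsto' (hV n P hP) fun j => ?_
  have htel : f t - f s = ∑ k ∈ Finset.range (n j), (f (P j (k + 1)) - f (P j k)) := by
    rw [Finset.sum_range_sub (fun k => f (P j k)), hP.2.1 j, hP.1 j]
  rw [htel]
  exact Finset.le_sum_of_subadditive g hg0.le hg _ _

end Variation

lemma map_add_le_add_of_convex_of_homogeneous {E : Type*} [AddCommGroup E] [Module ℝ E]
    {g : E → ℝ≥0∞}
    (hconv : ∀ u v : E, ∀ θ : ℝ, θ ∈ Icc (0:ℝ) 1 →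
      g (θ • u + (1 - θ) • v) ≤ ENNReal.ofReal θ * g u + ENNReal.ofReal (1 - θ) * g v)
    (hhom : ∀ l : ℝ, 0 < l → ∀ v : E, g (l • v) = ENNReal.ofReal l * g v) (u v : E) :
    g (u + v) ≤ g u + g v := by
  have hmid : u + v = (2 : ℝ) • ((1 / 2 : ℝ) • u + (1 - 1 / 2 : ℝ) • v) := by
    rw [smul_add, smul_smul, smul_smul]; norm_num
  calc g (u + v) = ENNReal.ofReal 2 * g ((1 / 2 : ℝ) • u + (1 - 1 / 2 : ℝ) • v) := by
        rw [hmid, hhom 2 two_pos]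
    _ ≤ ENNReal.ofReal 2 * (ENNReal.ofReal (1 / 2) * g u + ENNReal.ofReal (1 - 1 / 2) * g v) := by
        gcongr; exact hconv u v _ ⟨by norm_num, by norm_num⟩
    _ = g u + g v := by
        rw [mul_add, ← mul_assoc, ← mul_assoc, ← ENNReal.ofReal_mul (by norm_num),
          ← ENNReal.ofReal_mul (by norm_num)]
        norm_num

lemma le_ofReal_one_add_mul_of_le_add {ι : Type*} {ψ R₁ R₂ : ι → ℝ≥0∞} {α I : ℝ}
    (hα : 0 < α) (hI : 0 ≤ I) (hlow : ∀ v, ENNReal.ofReal α * ψ v ≤ R₂ v)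
    (hR : ∀ v, ψ v ≠ ⊤ → R₁ v ≤ R₂ v + ψ v * ENNReal.ofReal I) (v : ι) :
    R₁ v ≤ ENNReal.ofReal (1 + 1 / α * I) * R₂ v := by
  have hβ : 0 ≤ 1 / α * I := mul_nonneg (by positivity) hI
  by_cases hψ : ψ v = ⊤
  · have hR₂ : R₂ v = ⊤ := by
      simpa [hψ, ENNReal.mul_top (ENNReal.ofReal_pos.2 hα).ne'] using hlow v
    rw [hR₂, ENNReal.mul_top (ENNReal.ofReal_pos.2 (by linarith)).ne']
    exact le_top
  calc R₁ v ≤ R₂ v + ψ v * ENNReal.ofReal I := hR v hψ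
    _ = R₂ v + ENNReal.ofReal (1 / α * I) * (ENNReal.ofReal α * ψ v) := by
        rw [← mul_assoc, ← ENNReal.ofReal_mul hβ, mul_comm (ψ v)]
        field_simp
    _ ≤ R₂ v + ENNReal.ofReal (1 / α * I) * R₂ v := by gcongr; exact hlow v
    _ = ENNReal.ofReal (1 + 1 / α * I) * R₂ v := by
        rw [ENNReal.ofReal_add zero_le_one hβ, add_mul, ENNReal.ofReal_one, one_mul]

lemma ofReal_one_sub_mul_le_of_le_ofReal_one_add_mul {a b : ℝ≥0∞} {β : ℝ} (hβ : 0 ≤ β)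
    (h : a ≤ ENNReal.ofReal (1 + β) * b) :
    ENNReal.ofReal (1 - β) * a ≤ b :=
  calc ENNReal.ofReal (1 - β) * a ≤ ENNReal.ofReal (1 - β) * (ENNReal.ofReal (1 + β) * b) := by
        gcongr
    _ = ENNReal.ofReal ((1 - β) * (1 + β)) * b := by
        rw [ENNReal.ofReal_mul' (by linarith), mul_assoc]
    _ ≤ 1 * b := by gcongr; exact ENNReal.ofReal_le_one.2 (by nlinarith)
    _ = b := one_mul b

theorem stmt15_general
    {X : Type*} [NormedAddCommGroup X] [NormedSpace ℝ X]
    (a b : ℝ)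
    (ψ : X → ℝ≥0∞)
    (R : ℝ → X → ℝ≥0∞) (αl : ℝ) (hαl : 0 < αl)
    (hRconv : ∀ t ∈ Icc a b, ∀ u v : X, ∀ θ : ℝ, θ ∈ Icc (0:ℝ) 1 →
      R t (θ • u + (1 - θ) • v) ≤ ENNReal.ofReal θ * R t u + ENNReal.ofReal (1 - θ) * R t v)
    (hRhom : ∀ t ∈ Icc a b, ∀ l : ℝ, 0 < l → ∀ v : X, R t (l • v) = ENNReal.ofReal l * R t v)
    (hR0 : ∀ t ∈ Icc a b, R t 0 = 0)
    (hRlow : ∀ t ∈ Icc a b, ∀ v : X, ENNReal.ofReal αl * ψ v ≤ R t v)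
    (ρ : ℝ → ℝ) (hρnonneg : ∀ τ, 0 ≤ ρ τ)
    (hρint : IntervalIntegrable ρ volume a b)
    (hRtime : ∀ s t : ℝ, a ≤ s → s ≤ t → t ≤ b → ∀ v : X, ψ v ≠ ⊤ →
      R t v ≤ R s v + ψ v * ENNReal.ofReal (∫ τ in s..t, ρ τ) ∧
        R s v ≤ R t v + ψ v * ENNReal.ofReal (∫ τ in s..t, ρ τ))
    (f : ℝ → X)
    (s t : ℝ) (hs : a ≤ s) (hst : s ≤ t) (htb : t ≤ b)
    (V Vfr : ℝ≥0∞)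
    (hV : RVarEq R f s t V)
    (hVfr : RVarEq (fun _ => R s) f s t Vfr) :
    ENNReal.ofReal (1 - (1 / αl) * ∫ τ in s..t, ρ τ) * Vfr ≤ V ∧
      ENNReal.ofReal (1 - (1 / αl) * ∫ τ in s..t, ρ τ) * R s (f t - f s) ≤ V := by
  have hsab : s ∈ Icc a b := ⟨hs, hst.trans htb⟩
  have hI : 0 ≤ ∫ τ in s..t, ρ τ := intervalIntegral.integral_nonneg hst fun τ _ => hρnonneg τ
  have hρst : IntervalIntegrable ρ volume s t :=
    hρint.mono_set (uIcc_subset_uIcc (Icc_subset_uIcc hsab) (Icc_subset_uIcc ⟨hs.trans hst, htb⟩))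
  have hfrozen : ∀ τ ∈ Icc s t, ∀ v,
      R s v ≤ ENNReal.ofReal (1 + 1 / αl * ∫ τ in s..t, ρ τ) * R τ v := by
    intro τ hτ
    refine le_ofReal_one_add_mul_of_le_add hαl hI (hRlow τ ⟨hs.trans hτ.1, hτ.2.trans htb⟩)
      fun v hv => (hRtime s τ hs hτ.1 (hτ.2.trans htb) v hv).2.trans ?_
    gcongr
    exact intervalIntegral.integral_mono_interval le_rfl hτ.1 hτ.2
      (Eventually.of_forall hρnonneg) hρst
  have hmain := ofReal_one_sub_mul_le_of_le_ofReal_one_add_mul (mul_nonneg (by positivity) hI)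
    (hVfr.le_const_mul hV ofReal_ne_top hst hfrozen)
  have hRsub : R s (f t - f s) ≤ Vfr := hVfr.apply_sub_le (hR0 s hsab)
    (map_add_le_add_of_convex_of_homogeneous (hRconv s hsab) (hRhom s hsab)) hst
  exact ⟨hmain, le_trans (by gcongr) hmain⟩

theorem stmt15
    {X : Type*} [NormedAddCommGroup X] [NormedSpace ℝ X] [CompleteSpace X]
    (hrefl : Function.Surjective (NormedSpace.inclusionInDoubleDual ℝ X))
    (a b : ℝ) (hab : a ≤ b)
    (ψ : X → ℝ≥0∞) (c : ℝ) (hc : 0 < c)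
    (hψ0 : ψ 0 = 0)
    (hψconv : ∀ u v : X, ∀ θ : ℝ, θ ∈ Icc (0:ℝ) 1 →
      ψ (θ • u + (1 - θ) • v) ≤ ENNReal.ofReal θ * ψ u + ENNReal.ofReal (1 - θ) * ψ v)
    (hψhom : ∀ l : ℝ, 0 < l → ∀ v : X, ψ (l • v) = ENNReal.ofReal l * ψ v)
    (hψlsc : LowerSemicontinuous ψ)
    (hψcoer : ∀ v : X, ENNReal.ofReal (c * ‖v‖) ≤ ψ v)
    (R : ℝ → X → ℝ≥0∞) (αl αu : ℝ) (hαl : 0 < αl) (hαlu : αl ≤ αu)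
    (hRconv : ∀ t ∈ Icc a b, ∀ u v : X, ∀ θ : ℝ, θ ∈ Icc (0:ℝ) 1 →
      R t (θ • u + (1 - θ) • v) ≤ ENNReal.ofReal θ * R t u + ENNReal.ofReal (1 - θ) * R t v)
    (hRhom : ∀ t ∈ Icc a b, ∀ l : ℝ, 0 < l → ∀ v : X, R t (l • v) = ENNReal.ofReal l * R t v)
    (hRlsc : ∀ t ∈ Icc a b, LowerSemicontinuous (R t))
    (hR0 : ∀ t ∈ Icc a b, R t 0 = 0)
    (hRlow : ∀ t ∈ Icc a b, ∀ v : X, ENNReal.ofReal αl * ψ v ≤ R t v)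
    (hRup : ∀ t ∈ Icc a b, ∀ v : X, R t v ≤ ENNReal.ofReal αu * ψ v)
    (ρ : ℝ → ℝ) (hρnonneg : ∀ τ, 0 ≤ ρ τ)
    (hρint : IntervalIntegrable ρ volume a b)
    (hRtime : ∀ s t : ℝ, a ≤ s → s ≤ t → t ≤ b → ∀ v : X, ψ v ≠ ⊤ →
      R t v ≤ R s v + ψ v * ENNReal.ofReal (∫ τ in s..t, ρ τ) ∧
        R s v ≤ R t v + ψ v * ENNReal.ofReal (∫ τ in s..t, ρ τ))
    (f : ℝ → X)
    (Vtot : ℝ≥0∞) (hVtot : RVarEq R f a b Vtot) (hBV : Vtot ≠ ⊤)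
    (s t : ℝ) (hs : a ≤ s) (hst : s ≤ t) (htb : t ≤ b)
    (hsmall : (∫ τ in s..t, ρ τ) < αl)
    (V Vfr : ℝ≥0∞)
    (hV : RVarEq R f s t V)
    (hVfr : RVarEq (fun _ => R s) f s t Vfr) :
    ENNReal.ofReal (1 - (1 / αl) * ∫ τ in s..t, ρ τ) * Vfr ≤ V ∧
      ENNReal.ofReal (1 - (1 / αl) * ∫ τ in s..t, ρ τ) * R s (f t - f s) ≤ V :=
  stmt15_general a b ψ R αl hαl hRconv hRhom hR0 hRlow ρ hρnonneg hρint hRtime f s t hs hst htb V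
    Vfr hV hVfr
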